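/- arXiv:1012.0291 — 2 statements merged into one kernel-verified Lean document; each statement's English description precedes it below -/
import Mathlib

section
/- For positive solutions of A' = C/B + f₀, B' = C/A, C' = -C²/(AB) with constant f₀ > 0, the asymptotics B(t)² ~ (2Φ/f₀) log t hold as t → ∞, where Φ = B₀C₀; equivalently B(t)²/log t → 2B₀C₀/f₀. -/
open Set Filter Topology

/-!
Along a positive solution the product `B C` is conserved, say `B C = Φ`, so `(B²)' = 2Φ/A`.
Since `B` increases and `C` decreases, `A' = C/B + f₀ ≤ C₀/B₀ + f₀`, so `A` grows at most
linearly and `B²` at least logarithmically; in particular `B → ∞`. Then `A' = f₀ + Φ/B² → f₀`,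
and the `∞/∞` form of L'Hôpital's rule gives first `A(t)/t → f₀` and then
`B²/log t → lim t (B²)' = lim 2Φ t/A = 2Φ/f₀`.
-/

section Comparison

variable {f g f' g' : ℝ → ℝ} {a : ℝ}

theorem monotoneOn_Ici_of_hasDerivAt_nonneg (hf : ∀ t ∈ Ici a, HasDerivAt f (f' t) t)
    (hf' : ∀ t ∈ Ici a, 0 ≤ f' t) : MonotoneOn f (Ici a) :=
  monotoneOn_of_hasDerivWithinAt_nonneg (convex_Ici a)
    (fun t ht => (hf t ht).continuousAt.continuousWithinAt)
    (fun t ht => (hf t (interior_subset ht)).hasDerivWithinAt)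
    (fun t ht => hf' t (interior_subset ht))

theorem sub_le_sub_of_hasDerivAt_le (hf : ∀ t ∈ Ici a, HasDerivAt f (f' t) t)
    (hg : ∀ t ∈ Ici a, HasDerivAt g (g' t) t) (hle : ∀ t ∈ Ici a, f' t ≤ g' t)
    {t : ℝ} (ht : a ≤ t) : f t - f a ≤ g t - g a := by
  have : g a - f a ≤ g t - f t :=
    monotoneOn_Ici_of_hasDerivAt_nonneg (f := fun s => g s - f s) (f' := fun s => g' s - f' s)
      (fun s hs => (hg s hs).sub (hf s hs)) (fun s hs => sub_nonneg.2 (hle s hs))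
      self_mem_Ici ht ht
  linarith

theorem eq_of_hasDerivAt_zero (hf : ∀ t ∈ Ici a, HasDerivAt f 0 t) {t : ℝ} (ht : a ≤ t) :
    f t = f a := by
  have hconst : ∀ s ∈ Ici a, HasDerivAt (fun _ => (0 : ℝ)) 0 s := fun s _ => hasDerivAt_const s 0
  have hle := sub_le_sub_of_hasDerivAt_le hf hconst (fun _ _ => le_rfl) ht
  have hge := sub_le_sub_of_hasDerivAt_le hconst hf (fun _ _ => le_rfl) ht
  simp only [sub_self] at hle hge
  linarith

theorem eventually_lt_div_of_eventually_lt_deriv_div (hf : ∀ t ∈ Ici a, HasDerivAt f (f' t) t)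
    (hg : ∀ t ∈ Ici a, HasDerivAt g (g' t) t) (hg' : ∀ t ∈ Ici a, 0 < g' t)
    (hg_top : Tendsto g atTop atTop) {l m : ℝ} (hlm : l < m)
    (hm : ∀ᶠ t in atTop, m < f' t / g' t) : ∀ᶠ t in atTop, l < f t / g t := by
  obtain ⟨T, hT⟩ := eventually_atTop.1 (hm.and (eventually_ge_atTop a))
  have hTa : a ≤ T := (hT T le_rfl).2
  have hcomp : ∀ t, T ≤ t → m * g t - m * g T ≤ f t - f T :=
    fun t ht => sub_le_sub_of_hasDerivAt_le (f := fun s => m * g s) (f' := fun s => m * g' s)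
      (fun s hs => (hg s (hTa.trans hs)).const_mul m) (fun s hs => hf s (hTa.trans hs))
      (fun s hs => ((lt_div_iff₀ (hg' s (hTa.trans hs))).1 (hT s hs).1).le) ht
  have hlim : Tendsto (fun t => m + (f T - m * g T) / g t) atTop (𝓝 m) := by
    simpa using tendsto_const_nhds.add (tendsto_const_nhds.div_atTop hg_top)
  filter_upwards [hlim.eventually (lt_mem_nhds hlm), eventually_ge_atTop T,
    hg_top.eventually_gt_atTop 0] with t hlt hTt hgt
  calc l < m + (f T - m * g T) / g t := hlt
    _ ≤ f t / g t := by
      rw [le_div_iff₀ hgt, add_mul, div_mul_cancel₀ _ hgt.ne']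
      linarith [hcomp t hTt]

theorem lhopital_infty_atTop_on_Ici (hf : ∀ t ∈ Ici a, HasDerivAt f (f' t) t)
    (hg : ∀ t ∈ Ici a, HasDerivAt g (g' t) t) (hg' : ∀ t ∈ Ici a, 0 < g' t)
    (hg_top : Tendsto g atTop atTop) {L : ℝ} (hlim : Tendsto (fun t => f' t / g' t) atTop (𝓝 L)) :
    Tendsto (fun t => f t / g t) atTop (𝓝 L) := by
  rw [tendsto_order] at hlim ⊢
  refine ⟨fun l hl => ?_, fun u hu => ?_⟩
  · obtain ⟨m, hlm, hmL⟩ := exists_between hl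
    exact eventually_lt_div_of_eventually_lt_deriv_div hf hg hg' hg_top hlm (hlim.1 m hmL)
  · obtain ⟨m, hLm, hmu⟩ := exists_between hu
    have hneg := eventually_lt_div_of_eventually_lt_deriv_div (f := fun t => -f t)
      (f' := fun t => -f' t) (fun t ht => (hf t ht).neg) hg hg' hg_top (neg_lt_neg hmu)
      (by filter_upwards [hlim.2 m hLm] with t ht; rw [neg_div]; exact neg_lt_neg ht)
    filter_upwards [hneg] with t ht
    rw [neg_div] at ht
    exact neg_lt_neg_iff.1 ht

end Comparison

structure IsNil3Solution (A B C : ℝ → ℝ) (f₀ : ℝ) : Prop where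
  A_pos : ∀ t ∈ Ici (0 : ℝ), 0 < A t
  B_pos : ∀ t ∈ Ici (0 : ℝ), 0 < B t
  C_pos : ∀ t ∈ Ici (0 : ℝ), 0 < C t
  hasDerivAt_A : ∀ t ∈ Ici (0 : ℝ), HasDerivAt A (C t / B t + f₀) t
  hasDerivAt_B : ∀ t ∈ Ici (0 : ℝ), HasDerivAt B (C t / A t) t
  hasDerivAt_C : ∀ t ∈ Ici (0 : ℝ), HasDerivAt C (-(C t) ^ 2 / (A t * B t)) t

namespace IsNil3Solution

variable {A B C : ℝ → ℝ} {f₀ : ℝ}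

theorem B_mul_C_eq (h : IsNil3Solution A B C f₀) {t : ℝ} (ht : 0 ≤ t) :
    B t * C t = B 0 * C 0 :=
  eq_of_hasDerivAt_zero (f := fun s => B s * C s) (fun s hs => by
    have hAs := (h.A_pos s hs).ne'
    have hBs := (h.B_pos s hs).ne'
    refine ((h.hasDerivAt_B s hs).mul (h.hasDerivAt_C s hs)).congr_deriv ?_
    field_simp
    ring) ht

theorem B_zero_le (h : IsNil3Solution A B C f₀) {t : ℝ} (ht : 0 ≤ t) : B 0 ≤ B t :=
  monotoneOn_Ici_of_hasDerivAt_nonneg h.hasDerivAt_B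
    (fun s hs => div_nonneg (h.C_pos s hs).le (h.A_pos s hs).le) self_mem_Ici ht ht

theorem C_le_C_zero (h : IsNil3Solution A B C f₀) {t : ℝ} (ht : 0 ≤ t) : C t ≤ C 0 := by
  have hanti := monotoneOn_Ici_of_hasDerivAt_nonneg (f := fun s => -C s)
    (fun s hs => (h.hasDerivAt_C s hs).neg)
    (fun s hs => neg_nonneg.2 <| div_nonpos_of_nonpos_of_nonneg (neg_nonpos.2 (sq_nonneg _))
      (mul_pos (h.A_pos s hs) (h.B_pos s hs)).le)
    self_mem_Ici ht ht
  simpa using hanti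

theorem hasDerivAt_B_sq (h : IsNil3Solution A B C f₀) {t : ℝ} (ht : 0 ≤ t) :
    HasDerivAt (fun u => B u ^ 2) (2 * (B 0 * C 0) / A t) t := by
  have hAt := (h.A_pos t ht).ne'
  refine ((h.hasDerivAt_B t ht).pow 2).congr_deriv ?_
  rw [← h.B_mul_C_eq ht]
  field_simp
  ring

theorem A_le (h : IsNil3Solution A B C f₀) {t : ℝ} (ht : 0 ≤ t) :
    A t ≤ A 0 + (f₀ + C 0 / B 0) * t := by
  have hlin : ∀ s ∈ Ici (0 : ℝ), HasDerivAt (fun u => A 0 + (f₀ + C 0 / B 0) * u)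
      (f₀ + C 0 / B 0) s := fun s _ => by
    simpa using ((hasDerivAt_id s).const_mul (f₀ + C 0 / B 0)).const_add (A 0)
  have hA'_le : ∀ s ∈ Ici (0 : ℝ), C s / B s + f₀ ≤ f₀ + C 0 / B 0 := fun s hs => by
    have : C s / B s ≤ C 0 / B 0 :=
      div_le_div₀ (h.C_pos 0 self_mem_Ici).le (h.C_le_C_zero hs) (h.B_pos 0 self_mem_Ici)
        (h.B_zero_le hs)
    linarith
  have := sub_le_sub_of_hasDerivAt_le h.hasDerivAt_A hlin hA'_le ht
  simp only [mul_zero, add_zero] at this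
  linarith

theorem tendsto_B_sq_atTop (h : IsNil3Solution A B C f₀) (hf₀ : 0 ≤ f₀) :
    Tendsto (fun t => B t ^ 2) atTop atTop := by
  have hA0 := h.A_pos 0 self_mem_Ici
  have hB0 := h.B_pos 0 self_mem_Ici
  have hC0 := h.C_pos 0 self_mem_Ici
  set K := f₀ + C 0 / B 0
  have hK : 0 < K := by positivity
  set c := 2 * (B 0 * C 0) / K
  have hc : 0 < c := by positivity
  have hlog : ∀ s ∈ Ici (0 : ℝ), HasDerivAt (fun u => c * Real.log (A 0 + K * u))
      (2 * (B 0 * C 0) / (A 0 + K * s)) s := fun s hs => by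
    have hpos : 0 < A 0 + K * s := by nlinarith [mem_Ici.1 hs]
    have hlin : HasDerivAt (fun u => A 0 + K * u) K s := by
      simpa using ((hasDerivAt_id s).const_mul K).const_add (A 0)
    refine ((hlin.log hpos.ne').const_mul c).congr_deriv ?_
    simp only [c]
    field_simp
  have hlower : ∀ t, 0 ≤ t →
      c * Real.log (A 0 + K * t) + (B 0 ^ 2 - c * Real.log (A 0)) ≤ B t ^ 2 := fun t ht => by
    have := sub_le_sub_of_hasDerivAt_le hlog (fun s hs => h.hasDerivAt_B_sq hs)
      (fun s hs => div_le_div_of_nonneg_left (by positivity) (h.A_pos s hs) (h.A_le hs)) ht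
    simp only [mul_zero, add_zero] at this
    linarith
  refine tendsto_atTop_mono' atTop ((eventually_ge_atTop 0).mono hlower) ?_
  refine tendsto_atTop_add_const_right _ _ (Tendsto.const_mul_atTop hc ?_)
  exact Real.tendsto_log_atTop.comp (tendsto_atTop_add_const_left _ _
    (tendsto_id.const_mul_atTop hK))

theorem tendsto_A_div_self (h : IsNil3Solution A B C f₀) (hf₀ : 0 ≤ f₀) :
    Tendsto (fun t => A t / t) atTop (𝓝 f₀) := by
  have hCB : Tendsto (fun t => C t / B t + f₀) atTop (𝓝 f₀) := by
    have hΦ : Tendsto (fun t => B 0 * C 0 / B t ^ 2 + f₀) atTop (𝓝 (0 + f₀)) :=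
      (tendsto_const_nhds.div_atTop (h.tendsto_B_sq_atTop hf₀)).add_const f₀
    rw [zero_add] at hΦ
    refine hΦ.congr' ?_
    filter_upwards [eventually_ge_atTop 0] with t ht
    have hBt := (h.B_pos t ht).ne'
    rw [← h.B_mul_C_eq ht]
    field_simp
  refine lhopital_infty_atTop_on_Ici (g' := fun _ => 1) h.hasDerivAt_A
    (fun t _ => hasDerivAt_id t) (fun _ _ => one_pos) tendsto_id ?_
  simpa using hCB

end IsNil3Solution

/-- For the Nil³ `(RH)_c` system with constant coupling `f₀ > 0`,
`B(t)² ~ (2Φ/f₀) log t` as `t → ∞`, where `Φ = B₀C₀`. -/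
theorem nil3_constant_coupling_B_asymptotics
    (A B C : ℝ → ℝ) (f₀ : ℝ) (hf₀ : 0 < f₀)
    (hApos : ∀ t ∈ Ici (0:ℝ), 0 < A t)
    (hBpos : ∀ t ∈ Ici (0:ℝ), 0 < B t)
    (hCpos : ∀ t ∈ Ici (0:ℝ), 0 < C t)
    (hA : ∀ t ∈ Ici (0:ℝ), HasDerivAt A (C t / B t + f₀) t)
    (hB : ∀ t ∈ Ici (0:ℝ), HasDerivAt B (C t / A t) t)
    (hC : ∀ t ∈ Ici (0:ℝ), HasDerivAt C (-(C t) ^ 2 / (A t * B t)) t) :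
    Tendsto (fun t => B t ^ 2 / Real.log t) atTop (nhds (2 * (B 0 * C 0) / f₀)) := by
  have h : IsNil3Solution A B C f₀ := ⟨hApos, hBpos, hCpos, hA, hB, hC⟩
  have hlim : Tendsto (fun t => 2 * (B 0 * C 0) / A t / t⁻¹) atTop
      (𝓝 (2 * (B 0 * C 0) / f₀)) := by
    convert ((h.tendsto_A_div_self hf₀.le).inv₀ hf₀.ne').const_mul (2 * (B 0 * C 0))
      using 2 <;> ring
  exact lhopital_infty_atTop_on_Ici (a := 1)
    (fun t ht => h.hasDerivAt_B_sq (zero_le_one.trans ht))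
    (fun t ht => Real.hasDerivAt_log (by linarith [mem_Ici.1 ht]))
    (fun t ht => inv_pos.2 (by linarith [mem_Ici.1 ht])) Real.tendsto_log_atTop hlim
end

section
/- Solutions of the Ricci flow ODE system A' = C/B, B' = C/A, C' = -C²/(AB) on Nil³ with positive initial data satisfy A(t) ~ A₀ K^{-1/3} t^{1/3}, B(t) ~ B₀ K^{-1/3} t^{1/3}, C(t) ~ C₀ K^{1/3} t^{-1/3} as t → ∞, where K = A₀B₀/(3C₀). -/
open Set Filter Topology

/-!
Along the flow the quantity `x = AB/C` satisfies `x' = 3`, so `x(t) = x(0) + 3t = 3K(1 + t/K)`,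
and the equations become `A'/A = B'/B = x'/(3x)` and `C'/C = -x'/(3x)`. Hence `A` and `B` are
constant multiples of `x^{1/3}` and `C` of `x^{-1/3}`, which gives the solution in closed form;
the asymptotics follow from `(1 + t/K)/(t/K) → 1`.
-/

theorem eq_of_hasDerivAt_zero_Ici {f : ℝ → ℝ} {a : ℝ}
    (hf : ∀ t ∈ Ici a, HasDerivAt f 0 t) : ∀ t ∈ Ici a, f t = f a := fun t ht =>
  constant_of_has_deriv_right_zero (fun s hs => (hf s hs.1).continuousAt.continuousWithinAt)
    (fun s hs => (hf s hs.1).hasDerivWithinAt) t ⟨ht, le_rfl⟩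

theorem eq_add_mul_sub_of_hasDerivAt_const_Ici {x : ℝ → ℝ} {a c : ℝ}
    (hx : ∀ t ∈ Ici a, HasDerivAt x c t) : ∀ t ∈ Ici a, x t = x a + c * (t - a) := by
  have hconst := eq_of_hasDerivAt_zero_Ici (f := fun t => x t - c * t) fun t ht =>
    ((hx t ht).sub ((hasDerivAt_id' t).const_mul c)).congr_deriv (by ring)
  intro t ht
  linear_combination hconst t ht

theorem eq_mul_div_rpow_of_hasDerivAt_Ici {f x x' : ℝ → ℝ} {a p : ℝ}
    (hxpos : ∀ t ∈ Ici a, 0 < x t) (hx : ∀ t ∈ Ici a, HasDerivAt x (x' t) t)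
    (hf : ∀ t ∈ Ici a, HasDerivAt f (p * f t * x' t / x t) t) :
    ∀ t ∈ Ici a, f t = f a * (x t / x a) ^ p := by
  have hconst := eq_of_hasDerivAt_zero_Ici (f := fun t => f t * x t ^ (-p)) fun t ht => by
    have hxt := hxpos t ht
    refine ((hf t ht).mul ((hx t ht).rpow_const (p := -p) (Or.inl hxt.ne'))).congr_deriv ?_
    rw [Real.rpow_sub hxt, Real.rpow_one]
    field_simp
    ring
  intro t ht
  have hxt := hxpos t ht
  have hxa := hxpos a self_mem_Ici
  have key : f t * x t ^ (-p) = f a * x a ^ (-p) := hconst t ht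
  rw [Real.rpow_neg hxt.le, Real.rpow_neg hxa.le] at key
  rw [Real.div_rpow hxt.le hxa.le]
  have := Real.rpow_pos_of_pos hxt p
  have := Real.rpow_pos_of_pos hxa p
  field_simp at key ⊢
  linear_combination key

theorem tendsto_mul_one_add_div_rpow_div_atTop {K : ℝ} (hK : 0 < K) (c p : ℝ) (hc : c ≠ 0) :
    Tendsto (fun t => c * (1 + t / K) ^ p / (c * K ^ (-p) * t ^ p)) atTop (𝓝 1) := by
  have hlim : Tendsto (fun t => (K / t + 1) ^ p) atTop (𝓝 1) := by
    simpa using ((tendsto_const_nhds (x := K)).div_atTop tendsto_id).add_const 1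
      |>.rpow_const (p := p) (Or.inl (by norm_num))
  refine hlim.congr' ?_
  filter_upwards [eventually_gt_atTop 0] with t ht
  rw [show K / t + 1 = (1 + t / K) / (t / K) by field_simp,
    Real.div_rpow (by positivity) (by positivity), Real.div_rpow ht.le hK.le,
    Real.rpow_neg hK.le]
  have := Real.rpow_pos_of_pos hK p
  have := Real.rpow_pos_of_pos ht p
  field_simp

theorem hasDerivAt_mul_div_of_nil3_ricci {A B C : ℝ → ℝ} {t : ℝ}
    (hA0 : A t ≠ 0) (hB0 : B t ≠ 0) (hC0 : C t ≠ 0)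
    (hA : HasDerivAt A (C t / B t) t) (hB : HasDerivAt B (C t / A t) t)
    (hC : HasDerivAt C (-(C t) ^ 2 / (A t * B t)) t) :
    HasDerivAt (fun s => A s * B s / C s) 3 t := by
  refine ((hA.mul hB).div hC hC0).congr_deriv ?_
  simp only [Pi.mul_apply]
  field_simp
  ring

theorem nil3_ricci_eq_mul_one_add_div_rpow {A B C : ℝ → ℝ}
    (hApos : ∀ t ∈ Ici (0:ℝ), 0 < A t) (hBpos : ∀ t ∈ Ici (0:ℝ), 0 < B t)
    (hCpos : ∀ t ∈ Ici (0:ℝ), 0 < C t)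
    (hA : ∀ t ∈ Ici (0:ℝ), HasDerivAt A (C t / B t) t)
    (hB : ∀ t ∈ Ici (0:ℝ), HasDerivAt B (C t / A t) t)
    (hC : ∀ t ∈ Ici (0:ℝ), HasDerivAt C (-(C t) ^ 2 / (A t * B t)) t) :
    ∀ t ∈ Ici (0:ℝ),
      A t = A 0 * (1 + t / (A 0 * B 0 / (3 * C 0))) ^ (1/3 : ℝ) ∧
      B t = B 0 * (1 + t / (A 0 * B 0 / (3 * C 0))) ^ (1/3 : ℝ) ∧
      C t = C 0 * (1 + t / (A 0 * B 0 / (3 * C 0))) ^ (-(1/3) : ℝ) := by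
  set x : ℝ → ℝ := fun s => A s * B s / C s with hx_def
  have hxpos : ∀ t ∈ Ici (0:ℝ), 0 < x t := fun t ht =>
    div_pos (mul_pos (hApos t ht) (hBpos t ht)) (hCpos t ht)
  have hx : ∀ t ∈ Ici (0:ℝ), HasDerivAt x 3 t := fun t ht =>
    hasDerivAt_mul_div_of_nil3_ricci (hApos t ht).ne' (hBpos t ht).ne' (hCpos t ht).ne'
      (hA t ht) (hB t ht) (hC t ht)
  have hratio : ∀ t ∈ Ici (0:ℝ), x t / x 0 = 1 + t / (A 0 * B 0 / (3 * C 0)) := by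
    intro t ht
    have h0 := self_mem_Ici (a := (0:ℝ))
    have := hApos 0 h0; have := hBpos 0 h0; have := hCpos 0 h0
    rw [eq_add_mul_sub_of_hasDerivAt_const_Ici hx t ht, hx_def]
    field_simp
    ring
  intro t ht
  rw [← hratio t ht]
  refine ⟨?_, ?_, ?_⟩ <;>
    refine eq_mul_div_rpow_of_hasDerivAt_Ici hxpos hx (fun s hs => ?_) t ht <;>
    have := hApos s hs <;> have := hBpos s hs <;> have := hCpos s hs
  · exact (hA s hs).congr_deriv (by simp only [hx_def]; field_simp)
  · exact (hB s hs).congr_deriv (by simp only [hx_def]; field_simp)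
  · exact (hC s hs).congr_deriv (by simp only [hx_def]; field_simp)

/-- Ricci flow on `Nil³`: solutions of `A' = C/B`, `B' = C/A`, `C' = -C²/(AB)`
with positive initial data satisfy `A(t) ~ A₀K^{-1/3}t^{1/3}`,
`B(t) ~ B₀K^{-1/3}t^{1/3}`, `C(t) ~ C₀K^{1/3}t^{-1/3}`, where `K = A₀B₀/(3C₀)`. -/
theorem nil3_ricci_flow_asymptotics
    (A B C : ℝ → ℝ)
    (hApos : ∀ t ∈ Ici (0:ℝ), 0 < A t)
    (hBpos : ∀ t ∈ Ici (0:ℝ), 0 < B t)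
    (hCpos : ∀ t ∈ Ici (0:ℝ), 0 < C t)
    (hA : ∀ t ∈ Ici (0:ℝ), HasDerivAt A (C t / B t) t)
    (hB : ∀ t ∈ Ici (0:ℝ), HasDerivAt B (C t / A t) t)
    (hC : ∀ t ∈ Ici (0:ℝ), HasDerivAt C (-(C t) ^ 2 / (A t * B t)) t) :
    Tendsto (fun t => A t / (A 0 * (A 0 * B 0 / (3 * C 0)) ^ (-(1:ℝ)/3) * t ^ ((1:ℝ)/3)))
        atTop (nhds 1) ∧
    Tendsto (fun t => B t / (B 0 * (A 0 * B 0 / (3 * C 0)) ^ (-(1:ℝ)/3) * t ^ ((1:ℝ)/3)))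
        atTop (nhds 1) ∧
    Tendsto (fun t => C t / (C 0 * (A 0 * B 0 / (3 * C 0)) ^ ((1:ℝ)/3) * t ^ (-(1:ℝ)/3)))
        atTop (nhds 1) := by
  have h0 := self_mem_Ici (a := (0:ℝ))
  have hK : 0 < A 0 * B 0 / (3 * C 0) := by
    have := hApos 0 h0; have := hBpos 0 h0; have := hCpos 0 h0
    positivity
  have hsol := nil3_ricci_eq_mul_one_add_div_rpow hApos hBpos hCpos hA hB hC
  have hsol' : ∀ᶠ t in atTop, _ := (eventually_ge_atTop 0).mono hsol
  refine ⟨?_, ?_, ?_⟩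
  · refine (tendsto_mul_one_add_div_rpow_div_atTop hK _ (1/3) (hApos 0 h0).ne').congr' ?_
    filter_upwards [hsol'] with t ht
    rw [ht.1, neg_div]
  · refine (tendsto_mul_one_add_div_rpow_div_atTop hK _ (1/3) (hBpos 0 h0).ne').congr' ?_
    filter_upwards [hsol'] with t ht
    rw [ht.2.1, neg_div]
  · refine (tendsto_mul_one_add_div_rpow_div_atTop hK _ (-(1/3)) (hCpos 0 h0).ne').congr' ?_
    filter_upwards [hsol'] with t ht
    rw [ht.2.2, neg_neg, neg_div]
end
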